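/- arXiv:math/0604207 — 3 statements merged into one kernel-verified Lean document; each statement's English description precedes it below -/
import Mathlib

section
/- For any real constants a₁ ≠ 0, a₃, a₄, k with k ≠ 0 and k ≠ 1, the maps on (S, t, u) given by S̃ = S·e^(a₁ε), t̃ = t + a₂ε, ũ = u·e^(a₁(1-k)ε) + (a₃/(a₁k))·S·e^(a₁ε)·(1 - e^(-a₁kε)) + (a₄/(a₁(1-k)))·(e^(a₁(1-k)ε) - 1) form a one-parameter group: composing the transformation with parameter ε₁ and the transformation with parameter ε₂ yields the transformation with parameter ε₁ + ε₂. -/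
open Real

/-- The symmetry transformations `g_ε` form a one-parameter group:
`g_{ε₁} ∘ g_{ε₂} = g_{ε₁+ε₂}` and `g_0 = id`. -/
theorem stmt_4 (a₁ a₂ a₃ a₄ k : ℝ) (ha₁ : a₁ ≠ 0) (hk0 : k ≠ 0) (hk1 : k ≠ 1)
    (g : ℝ → ℝ × ℝ × ℝ → ℝ × ℝ × ℝ)
    (hg : ∀ ε S t u, g ε (S, t, u) =
      (S * exp (a₁ * ε),
       t + a₂ * ε,
       u * exp (a₁ * (1 - k) * ε)
         + (a₃ / (a₁ * k)) * S * exp (a₁ * ε) * (1 - exp (-(a₁ * k * ε)))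
         + (a₄ / (a₁ * (1 - k))) * (exp (a₁ * (1 - k) * ε) - 1))) :
    (∀ ε₁ ε₂ x, g ε₁ (g ε₂ x) = g (ε₁ + ε₂) x) ∧ g 0 = id := by
  have h1k : (1:ℝ) - k ≠ 0 := sub_ne_zero.mpr (Ne.symm hk1)
  constructor
  · rintro ε₁ ε₂ ⟨S, t, u⟩
    simp only [hg]
    have hE : ∀ ε : ℝ, exp (a₁*(1-k)*ε) = exp (a₁*ε) * exp (-(a₁*k*ε)) := by
      intro ε; rw [← exp_add]; ring_nf
    have hadd : ∀ x y : ℝ, exp (a₁*(x+y)) = exp (a₁*x) * exp (a₁*y) := by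
      intro x y; rw [← exp_add]; ring_nf
    have haddk : ∀ x y : ℝ, exp (-(a₁*k*(x+y))) = exp (-(a₁*k*x)) * exp (-(a₁*k*y)) := by
      intro x y; rw [← exp_add]; ring_nf
    simp only [Prod.mk.injEq, hE, hadd, haddk]
    refine ⟨by ring, by ring, ?_⟩
    field_simp
    ring
  · funext x
    obtain ⟨S, t, u⟩ := x
    simp [hg]
end

section
/- Let σ, a, b, k, ω, ρ be real with a ≠ 0, b = ρω ≠ 0, and let v : ℝ → ℝ be twice differentiable. Define u(S,t) = S^(1-k)·v(log S + a t) for S > 0. Then u satisfies u_t + (σ²S²/2)·u_SS/(1 - b S^(k+1) u_SS)² = 0 on the set where 1 - b S^(k+1) u_SS ≠ 0 if and only if v satisfies a·v_z + (σ²/2)·(v_zz + (1-2k)v_z - k(1-k)v)/(1 - b(v_zz + (1-2k)v_z - k(1-k)v))² = 0 on the corresponding set. -/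
open Real Filter Topology

/-!
In the variable `z = log S + a t` the Euler operator `S ∂_S` becomes `∂_z`, so that
`∂_S (S^p g(z)) = S^(p-1) (p g + g_z)`. Applied twice to `u = S^(1-k) v(z)` this gives
`S^(k+1) u_SS = v_zz + (1-2k) v_z - k(1-k) v`, while `u_t = S^(1-k) a v_z`.
Hence the left-hand side of the PDE at `(S, t)` is `S^(1-k) > 0` times the left-hand side
of the ODE at `z`, with matching denominators, and every `z` is attained (`S = e^z`, `t = 0`).
-/

noncomputable def reducedGamma (k : ℝ) (v : ℝ → ℝ) (z : ℝ) : ℝ :=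
  deriv (deriv v) z + (1 - 2 * k) * deriv v z - k * (1 - k) * v z

theorem hasDerivAt_rpow_mul_comp_log_add {g : ℝ → ℝ} {g' p c s : ℝ} (hs : 0 < s)
    (hg : HasDerivAt g g' (log s + c)) :
    HasDerivAt (fun x => x ^ p * g (log x + c)) (s ^ (p - 1) * (p * g (log s + c) + g')) s := by
  have hpow : HasDerivAt (fun x : ℝ => x ^ p) (p * s ^ (p - 1)) s :=
    hasDerivAt_rpow_const (Or.inl hs.ne')
  have hcomp : HasDerivAt (fun x => g (log x + c)) (g' * s⁻¹) s :=
    hg.comp s ((hasDerivAt_log hs.ne').add_const c)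
  refine (hpow.mul hcomp).congr_deriv ?_
  rw [rpow_sub_one hs.ne']
  ring

theorem deriv_rpow_mul_comp_log_add {g : ℝ → ℝ} {p c s : ℝ} (hs : 0 < s)
    (hg : DifferentiableAt ℝ g (log s + c)) :
    deriv (fun x => x ^ p * g (log x + c)) s
      = s ^ (p - 1) * (p * g (log s + c) + deriv g (log s + c)) :=
  (hasDerivAt_rpow_mul_comp_log_add hs hg.hasDerivAt).deriv

section Substitution

variable {k a : ℝ} {v : ℝ → ℝ} {u : ℝ → ℝ → ℝ}

theorem deriv_time_of_substitution (hu : ∀ S t, 0 < S → u S t = S ^ (1 - k) * v (log S + a * t))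
    (hv : Differentiable ℝ v) {S : ℝ} (t : ℝ) (hS : 0 < S) :
    deriv (fun τ => u S τ) t = S ^ (1 - k) * (a * deriv v (log S + a * t)) := by
  have hz : HasDerivAt (fun τ : ℝ => log S + a * τ) a t := by
    simpa using ((hasDerivAt_id t).const_mul a).const_add (log S)
  have hcomp : HasDerivAt (fun τ => S ^ (1 - k) * v (log S + a * τ))
      (S ^ (1 - k) * (deriv v (log S + a * t) * a)) t :=
    ((hv _).hasDerivAt.comp t hz).const_mul _
  rw [show (fun τ => u S τ) = _ from funext fun τ => hu S τ hS, hcomp.deriv]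
  ring

theorem deriv_space_of_substitution (hu : ∀ S t, 0 < S → u S t = S ^ (1 - k) * v (log S + a * t))
    (hv : Differentiable ℝ v) (t : ℝ) {S : ℝ} (hS : 0 < S) :
    deriv (fun s => u s t) S
      = S ^ (-k) * ((1 - k) * v (log S + a * t) + deriv v (log S + a * t)) := by
  have hloc : (fun s => u s t) =ᶠ[𝓝 S] fun s => s ^ (1 - k) * v (log s + a * t) :=
    eventuallyEq_of_mem (Ioi_mem_nhds hS) fun s hs => hu s t hs
  rw [hloc.deriv_eq, deriv_rpow_mul_comp_log_add hS (hv _), show 1 - k - 1 = -k by ring]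

theorem deriv_deriv_space_of_substitution
    (hu : ∀ S t, 0 < S → u S t = S ^ (1 - k) * v (log S + a * t))
    (hv : ContDiff ℝ 2 v) (t : ℝ) {S : ℝ} (hS : 0 < S) :
    deriv (deriv fun s => u s t) S = S ^ (-(k + 1)) * reducedGamma k v (log S + a * t) := by
  have hv₁ : Differentiable ℝ v := hv.differentiable (by norm_num)
  set G : ℝ → ℝ := fun z => (1 - k) * v z + deriv v z
  have hloc : deriv (fun s => u s t) =ᶠ[𝓝 S] fun s => s ^ (-k) * G (log s + a * t) :=
    eventuallyEq_of_mem (Ioi_mem_nhds hS) fun s hs => deriv_space_of_substitution hu hv₁ t hs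
  have hG : HasDerivAt G ((1 - k) * deriv v (log S + a * t) + deriv (deriv v) (log S + a * t))
      (log S + a * t) :=
    ((hv₁ _).hasDerivAt.const_mul _).add (hv.differentiable_deriv_two _).hasDerivAt
  rw [hloc.deriv_eq, (hasDerivAt_rpow_mul_comp_log_add hS hG).deriv, show -k - 1 = -(k + 1) by ring]
  simp only [G, reducedGamma]
  ring

theorem gamma_factor_of_substitution
    (hu : ∀ S t, 0 < S → u S t = S ^ (1 - k) * v (log S + a * t))
    (hv : ContDiff ℝ 2 v) (t : ℝ) {S : ℝ} (hS : 0 < S) :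
    S ^ (k + 1) * deriv (deriv fun s => u s t) S = reducedGamma k v (log S + a * t) := by
  rw [deriv_deriv_space_of_substitution hu hv t hS, ← mul_assoc, ← rpow_add hS,
    add_neg_cancel, rpow_zero, one_mul]

theorem pde_lhs_of_substitution (σ b : ℝ)
    (hu : ∀ S t, 0 < S → u S t = S ^ (1 - k) * v (log S + a * t))
    (hv : ContDiff ℝ 2 v) (t : ℝ) {S : ℝ} (hS : 0 < S) :
    deriv (fun τ => u S τ) t + σ ^ 2 * S ^ 2 / 2 *
        (deriv (deriv fun s => u s t) S / (1 - b * S ^ (k + 1) * deriv (deriv fun s => u s t) S) ^ 2)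
      = S ^ (1 - k) * (a * deriv v (log S + a * t) + σ ^ 2 / 2 *
        (reducedGamma k v (log S + a * t) / (1 - b * reducedGamma k v (log S + a * t)) ^ 2)) := by
  have hS2 : S ^ 2 * S ^ (-(k + 1)) = S ^ (1 - k) := by
    rw [← rpow_two, ← rpow_add hS]
    ring_nf
  rw [mul_assoc b, gamma_factor_of_substitution hu hv t hS,
    deriv_deriv_space_of_substitution hu hv t hS,
    deriv_time_of_substitution hu (hv.differentiable (by norm_num)) t hS, ← hS2]
  ring

end Substitution

theorem stmt_8_general (σ a b k : ℝ)
    (v : ℝ → ℝ) (hv : ContDiff ℝ 2 v)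
    (u : ℝ → ℝ → ℝ)
    (hu : ∀ S t, 0 < S → u S t = S ^ (1 - k) * v (Real.log S + a * t)) :
    ((∀ S t : ℝ, 0 < S →
        (1 - b * S ^ (k + 1) * deriv (deriv (fun s => u s t)) S ≠ 0 →
          deriv (fun τ => u S τ) t +
            σ ^ 2 * S ^ 2 / 2 *
              (deriv (deriv (fun s => u s t)) S /
                (1 - b * S ^ (k + 1) * deriv (deriv (fun s => u s t)) S) ^ 2) = 0))
      ↔
      (∀ z : ℝ,
        (1 - b * (deriv (deriv v) z + (1 - 2 * k) * deriv v z
            - k * (1 - k) * v z) ≠ 0 →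
          a * deriv v z +
            σ ^ 2 / 2 *
              ((deriv (deriv v) z + (1 - 2 * k) * deriv v z - k * (1 - k) * v z) /
                (1 - b * (deriv (deriv v) z + (1 - 2 * k) * deriv v z
                  - k * (1 - k) * v z)) ^ 2) = 0))) := by
  constructor
  · intro hpde z hz
    have hS : 0 < exp z := exp_pos z
    have hpde_z := hpde (exp z) 0 hS (by
      rwa [mul_assoc b, gamma_factor_of_substitution hu hv 0 hS, log_exp, mul_zero, add_zero])
    rw [pde_lhs_of_substitution σ b hu hv 0 hS, log_exp, mul_zero, add_zero] at hpde_z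
    exact (mul_eq_zero.mp hpde_z).resolve_left (rpow_pos_of_pos hS _).ne'
  · intro hode S t hS hne
    rw [mul_assoc b, gamma_factor_of_substitution hu hv t hS] at hne
    rw [pde_lhs_of_substitution σ b hu hv t hS]
    exact mul_eq_zero_of_right _ (hode _ hne)

/-- The substitution `z = log S + a t`, `u(S,t) = S^(1-k)·v(z)` reduces the
nonlinear Black–Scholes PDE to the ODE
`a·v_z + (σ²/2)·(v_zz + (1-2k)v_z - k(1-k)v)/(1 - b(v_zz + (1-2k)v_z - k(1-k)v))² = 0`
on the set where the denominator is nonzero. -/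
theorem stmt_8 (σ a b k ω ρ : ℝ) (ha : a ≠ 0) (hbρω : b = ρ * ω) (hb : b ≠ 0)
    (v : ℝ → ℝ) (hv : ContDiff ℝ 2 v)
    (u : ℝ → ℝ → ℝ)
    (hu : ∀ S t, 0 < S → u S t = S ^ (1 - k) * v (Real.log S + a * t)) :
    ((∀ S t : ℝ, 0 < S →
        (1 - b * S ^ (k + 1) * deriv (deriv (fun s => u s t)) S ≠ 0 →
          deriv (fun τ => u S τ) t +
            σ ^ 2 * S ^ 2 / 2 *
              (deriv (deriv (fun s => u s t)) S /
                (1 - b * S ^ (k + 1) * deriv (deriv (fun s => u s t)) S) ^ 2) = 0))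
      ↔
      (∀ z : ℝ,
        (1 - b * (deriv (deriv v) z + (1 - 2 * k) * deriv v z
            - k * (1 - k) * v z) ≠ 0 →
          a * deriv v z +
            σ ^ 2 / 2 *
              ((deriv (deriv v) z + (1 - 2 * k) * deriv v z - k * (1 - k) * v z) /
                (1 - b * (deriv (deriv v) z + (1 - 2 * k) * deriv v z
                  - k * (1 - k) * v z)) ^ 2) = 0))) :=
  stmt_8_general σ a b k v hv u hu
end

section
/- The polynomial F(ζ,w) = ζw² - 2(ζ² + ζ/b - q/(2b²))w + (ζ² + 2ζ/b + (1-q)/b²)ζ in two variables ζ, w over ℂ (with parameters b ≠ 0, q ≠ 0) is irreducible in ℂ[ζ,w]. -/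
/-!
As a polynomial in `w` over `ℂ[ζ]`, `F = ζ w² - 2A w + B` is primitive, because `ζ` is prime and
`A(0) = -q/(2b²) ≠ 0`. By Gauss's lemma it is therefore irreducible as soon as it has no root in
`ℂ(ζ)`. A root would make the discriminant `4(A² - ζB) = q²/b⁴ - (2q/b³) ζ` a square in `ℂ(ζ)`,
hence (`ℂ[ζ]` being integrally closed) in `ℂ[ζ]`, which is impossible for a polynomial of degree one.
-/

namespace Polynomial

theorem not_isSquare_of_odd_natDegree {R : Type*} [Semiring R] [NoZeroDivisors R] {p : R[X]}
    (hp : Odd p.natDegree) : ¬IsSquare p := by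
  rintro ⟨s, rfl⟩
  rw [← sq, natDegree_pow] at hp
  exact Nat.not_odd_iff_even.mpr (even_two_mul _) hp

theorem isPrimitive_of_irreducible_coeff {R : Type*} [CommSemiring R] {p : R[X]} {i j : ℕ}
    (hi : Irreducible (p.coeff i)) (hj : ¬p.coeff i ∣ p.coeff j) : p.IsPrimitive := by
  intro r hr
  rw [C_dvd_iff_dvd_coeff] at hr
  obtain ⟨s, hs⟩ := hr i
  refine (hi.isUnit_or_isUnit hs).resolve_right fun hs_unit => hj (dvd_trans ?_ (hr j))
  rw [hs]
  exact hs_unit.mul_right_dvd.mpr dvd_rfl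

theorem isPrimitive_quadratic_of_irreducible_of_not_dvd {R : Type*} [CommRing R] {a b c : R}
    (ha : Irreducible a) (hab : ¬a ∣ b) : (C a * X ^ 2 + C b * X + C c).IsPrimitive :=
  isPrimitive_of_irreducible_coeff (i := 2) (j := 1) (by simpa using ha) (by simpa using hab)

theorem irreducible_quadratic_of_not_isSquare_discrim {R : Type*} [CommRing R] [IsDomain R]
    [IsGCDMonoid R] {a b c : R} (ha : a ≠ 0) (hp : (C a * X ^ 2 + C b * X + C c).IsPrimitive)
    (hd : ¬IsSquare (discrim a b c)) : Irreducible (C a * X ^ 2 + C b * X + C c) := by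
  let φ := algebraMap R (FractionRing R)
  rw [hp.irreducible_iff_irreducible_map_fraction_map (K := FractionRing R)]
  have hdeg : ((C a * X ^ 2 + C b * X + C c).map φ).natDegree = 2 := by
    simp only [Polynomial.map_add, Polynomial.map_mul, Polynomial.map_pow, map_C, map_X]
    exact natDegree_quadratic ((map_ne_zero_iff φ (IsFractionRing.injective _ _)).mpr ha)
  refine irreducible_of_degree_le_three_of_not_isRoot (by rw [hdeg]; decide) fun x hx => hd ?_
  have hx' : φ a * (x * x) + φ b * x + φ c = 0 := by
    simpa [sq, mul_assoc] using hx
  -- the root gives a square root of the discriminant in the fraction field, which is integral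
  have hsq : φ (discrim a b c) = (2 * φ a * x + φ b) ^ 2 := by
    rw [← discrim_eq_sq_of_quadratic_eq_zero hx']
    simp only [discrim, map_sub, map_mul, map_pow, map_ofNat]
  obtain ⟨y, hy⟩ := IsIntegrallyClosed.exists_algebraMap_eq_of_isIntegral_pow two_pos
    (hsq ▸ isIntegral_algebraMap : IsIntegral R ((2 * φ a * x + φ b) ^ 2))
  refine ⟨y, IsFractionRing.injective R (FractionRing R) ?_⟩
  rw [map_mul, ← sq, hsq, ← hy]

end Polynomial

namespace MvPolynomial

variable (R : Type*) [CommRing R]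

noncomputable def finTwoEquivPolynomialPolynomial :
    MvPolynomial (Fin 2) R ≃ₐ[R] Polynomial (Polynomial R) :=
  (renameEquiv R (Equiv.swap 0 1)).trans <|
    (finSuccEquiv R 1).trans <| Polynomial.mapAlgEquiv <|
      (finSuccEquiv R 0).trans (Polynomial.mapAlgEquiv (isEmptyAlgEquiv R (Fin 0)))

@[simp]
theorem finTwoEquivPolynomialPolynomial_X_zero :
    finTwoEquivPolynomialPolynomial R (X 0) = Polynomial.C Polynomial.X := by
  have h : (X 1 : MvPolynomial (Fin 2) R) = X (Fin.succ 0) := rfl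
  simp only [finTwoEquivPolynomialPolynomial, AlgEquiv.trans_apply, renameEquiv_apply, rename_X,
    Equiv.swap_apply_left, h, finSuccEquiv_X_succ, Polynomial.mapAlgEquiv,
    AlgEquiv.ofAlgHom_apply]
  simp [Polynomial.mapAlgHom, finSuccEquiv_X_zero]

@[simp]
theorem finTwoEquivPolynomialPolynomial_X_one :
    finTwoEquivPolynomialPolynomial R (X 1) = Polynomial.X := by
  simp only [finTwoEquivPolynomialPolynomial, AlgEquiv.trans_apply, renameEquiv_apply, rename_X,
    Equiv.swap_apply_right, finSuccEquiv_X_zero, Polynomial.mapAlgEquiv, AlgEquiv.ofAlgHom_apply]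
  simp [Polynomial.mapAlgHom]

@[simp]
theorem finTwoEquivPolynomialPolynomial_C (a : R) :
    finTwoEquivPolynomialPolynomial R (C a) = Polynomial.C (Polynomial.C a) := by
  simpa [algebraMap_eq, Polynomial.algebraMap_eq] using
    (finTwoEquivPolynomialPolynomial R).commutes a

end MvPolynomial

section

open Polynomial

theorem discrim_quadratic_family_eq {R : Type*} [CommRing R] (u v : R) :
    discrim (X : R[X]) (-(2 * (X ^ 2 + C u * X - C v)))
      ((X ^ 2 + C (2 * u) * X + C (u ^ 2 - 2 * v)) * X) = C (-(8 * u * v)) * X + C (4 * v ^ 2) := by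
  simp only [discrim, map_mul, map_sub, map_pow, map_neg, map_ofNat]
  ring

/-- The polynomial `F` with `u = 1/b` and `v = q/(2b²)`; the inner variable is `ζ`, the outer `w`. -/
theorem irreducible_quadratic_family {K : Type*} [Field K] [NeZero (2 : K)] {u v : K}
    (hu : u ≠ 0) (hv : v ≠ 0) :
    Irreducible (C X * X ^ 2 + C (-(2 * (X ^ 2 + C u * X - C v))) * X
      + C ((X ^ 2 + C (2 * u) * X + C (u ^ 2 - 2 * v)) * X) : K[X][X]) := by
  have h8 : (8 : K) ≠ 0 := by
    rw [show (8 : K) = 2 ^ 3 by norm_num]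
    exact pow_ne_zero 3 two_ne_zero
  refine irreducible_quadratic_of_not_isSquare_discrim X_ne_zero
    (isPrimitive_quadratic_of_irreducible_of_not_dvd irreducible_X ?_)
    (not_isSquare_of_odd_natDegree ?_)
  · simp [X_dvd_iff, hv, two_ne_zero]
  · rw [discrim_quadratic_family_eq, natDegree_linear (by simp [hu, hv, h8])]
    exact odd_one

end

open MvPolynomial

/-- The polynomial `F(ζ,w) = ζw² - 2(ζ² + ζ/b - q/(2b²))w + (ζ² + 2ζ/b + (1-q)/b²)ζ`
is irreducible in `ℂ[ζ,w]` (here `X 0 = ζ`, `X 1 = w`). -/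
theorem stmt_12 (b q : ℂ) (hb : b ≠ 0) (hq : q ≠ 0) :
    Irreducible
      ((X 0 * X 1 ^ 2
        - C 2 * (X 0 ^ 2 + C (1 / b) * X 0 - C (q / (2 * b ^ 2))) * X 1
        + (X 0 ^ 2 + C (2 / b) * X 0 + C ((1 - q) / b ^ 2)) * X 0 :
          MvPolynomial (Fin 2) ℂ)) := by
  have hu : 1 / b ≠ 0 := one_div_ne_zero hb
  have hv : q / (2 * b ^ 2) ≠ 0 := div_ne_zero hq (by simp [hb])
  have h2u : 2 / b = 2 * (1 / b) := by ring
  have huv : (1 - q) / b ^ 2 = (1 / b) ^ 2 - 2 * (q / (2 * b ^ 2)) := by field_simp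
  rw [h2u, huv, ← MulEquiv.irreducible_iff (finTwoEquivPolynomialPolynomial ℂ)]
  convert irreducible_quadratic_family hu hv using 1
  simp only [map_add, map_sub, map_mul, map_pow, map_neg, map_ofNat,
    finTwoEquivPolynomialPolynomial_X_zero, finTwoEquivPolynomialPolynomial_X_one,
    finTwoEquivPolynomialPolynomial_C]
  ring
end
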